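/- A weighted graph G = (V,E,ω) admits a minres-constrained two-dimensional book-embedding if and only if G admits a 1-page book-embedding L such that, for each edge e ∈ E, ω(e) ≥ β_L(e) + 1, where β_L(e) is the burden of e in L. -/

import Mathlib

/-!
If the rectangles have width and height at least `1` and the vertices are `1`-separated, then
`u` and the vertices strictly inside an edge `(u, v)` are `1`-separated points of
`[x u, x v - 1]`, so the width is at least the burden plus one, and the weight (the area) is at
least the width. Conversely, placing every vertex at its rank makes the width of each edge exactly
its burden plus one, hence at most its weight. The rectangles are then stacked from the innermost
edges outwards: each starts at the highest top among the edges nested into it and has height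
`weight / width ≥ 1`. This is a recursion on the burden, which strictly decreases under nesting.
-/

namespace Schematic

/-- A 1-page book-embedding of `G`: vertices are linearly ordered via an injective
real-valued placement `f`, and no two edges cross. -/
def IsBE {V : Type*} (G : SimpleGraph V) (f : V → ℝ) : Prop :=
  Function.Injective f ∧
  ∀ a b c d : V, G.Adj a b → G.Adj c d → ¬ (f a < f c ∧ f c < f b ∧ f b < f d)

/-- Edge `(u,v)` wraps around edge `(w,z)` (equivalently, `(w,z)` is nested into `(u,v)`),
where `(w,z)` is written in increasing order. -/
def Wraps {V : Type*} (G : SimpleGraph V) (f : V → ℝ) (u v w z : V) : Prop :=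
  G.Adj u v ∧ G.Adj w z ∧ s(u, v) ≠ s(w, z) ∧
  f u ≤ f w ∧ f w < f z ∧ f z ≤ f v

/-- A two-dimensional book-embedding of a weighted graph: a supporting 1-page
book-embedding given by the x-coordinates `x`, and for each edge `(u,v)` with `u ≺ v`
a rectangle `[x u, x v] × [ylo u v, yhi u v]` with `ylo u v ≥ 0`, area equal to the
weight of the edge, and `ylo u v` equal to the maximum of `yhi` over the edges nested
into `(u,v)` (`0` if there is no such edge). -/
def IsTwoDimBE {V : Type*} (G : SimpleGraph V) (ω : V → V → ℝ)
    (x : V → ℝ) (ylo yhi : V → V → ℝ) : Prop :=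
  IsBE G x ∧
  (∀ u v : V, ylo u v = ylo v u) ∧
  (∀ u v : V, yhi u v = yhi v u) ∧
  (∀ u v : V, G.Adj u v → 0 ≤ ylo u v) ∧
  (∀ u v : V, G.Adj u v → x u < x v →
    (x v - x u) * (yhi u v - ylo u v) = ω u v) ∧
  (∀ u v : V, G.Adj u v → x u < x v →
    (∀ w z : V, Wraps G x u v w z → yhi w z ≤ ylo u v) ∧
    ((∃ w z : V, Wraps G x u v w z ∧ ylo u v = yhi w z) ∨
     ((¬ ∃ w z : V, Wraps G x u v w z) ∧ ylo u v = 0)))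

open Classical in
/-- The burden of an edge `(u,v)` with `u ≺ v`: the number of vertices strictly
between `u` and `v`. -/
noncomputable def burden {V : Type*} [Fintype V] (f : V → ℝ) (u v : V) : ℕ :=
  (Finset.univ.filter fun w : V => f u < f w ∧ f w < f v).card

/-- A minres-supporting book-embedding: a 1-page book-embedding in which the weight of
every edge is at least its burden plus one. -/
def IsMinresBE {V : Type*} [Fintype V] (G : SimpleGraph V) (ω : V → V → ℝ)
    (f : V → ℝ) : Prop :=
  IsBE G f ∧ ∀ u v : V, G.Adj u v → f u < f v → (burden f u v : ℝ) + 1 ≤ ω u v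

open Finset

theorem _root_.Finset.fold_max_eq_or {α β : Type*} [LinearOrder β] (s : Finset α) (b : β)
    (f : α → β) :
    s.fold max b f = b ∨ ∃ a ∈ s, s.fold max b f = f a := by
  obtain ⟨hb, hf⟩ := (fold_max_le (s.fold max b f)).1 le_rfl
  rcases (le_fold_max (s.fold max b f)).1 le_rfl with h | ⟨a, ha, h⟩
  · exact Or.inl (h.antisymm hb)
  · exact Or.inr ⟨a, ha, h.antisymm (hf a ha)⟩

theorem card_le_sub_add_one_of_pairwise_one_le_abs_sub {ι : Type*} {s : Finset ι} {x : ι → ℝ}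
    {a b : ℝ} (hab : a ≤ b) (hs : ∀ i ∈ s, x i ∈ Set.Icc a b)
    (hsep : (s : Set ι).Pairwise fun i j => 1 ≤ |x i - x j|) :
    (#s : ℝ) ≤ b - a + 1 := by
  have hmaps : ∀ i ∈ s, ⌊x i - a⌋₊ ∈ range (⌊b - a⌋₊ + 1) := fun i hi =>
    mem_range.2 (Nat.lt_succ_of_le (Nat.floor_mono (by linarith [(hs i hi).2])))
  have hinj : Set.InjOn (fun i => ⌊x i - a⌋₊) s := by
    intro i hi j hj hij
    by_contra hne
    have hfloor : ⌊x i - a⌋ = ⌊x j - a⌋ := by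
      rw [← Int.natCast_floor_eq_floor (by linarith [(hs i hi).1]),
        ← Int.natCast_floor_eq_floor (by linarith [(hs j hj).1])]
      exact congrArg Nat.cast hij
    have hlt := Int.abs_sub_lt_one_of_floor_eq_floor hfloor
    rw [sub_sub_sub_cancel_right] at hlt
    exact (hsep hi hj hne).not_gt hlt
  calc (#s : ℝ) ≤ ⌊b - a⌋₊ + 1 := by
        exact_mod_cast (card_le_card_of_injOn _ hmaps hinj).trans (card_range _).le
    _ ≤ b - a + 1 := by linarith [Nat.floor_le (sub_nonneg.2 hab)]

section Orient

variable {V : Type*}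

noncomputable def orient (x : V → ℝ) (F : V → V → ℝ) (u v : V) : ℝ :=
  if x u < x v then F u v else F v u

theorem orient_of_lt {x : V → ℝ} {F : V → V → ℝ} {u v : V} (h : x u < x v) :
    orient x F u v = F u v :=
  if_pos h

theorem orient_comm {x : V → ℝ} (hx : Function.Injective x) (F : V → V → ℝ) (u v : V) :
    orient x F u v = orient x F v u := by
  unfold orient
  rcases lt_trichotomy (x u) (x v) with h | h | h
  · simp [h, h.not_gt]
  · rw [hx h]
  · simp [h, h.not_gt]

end Orient

section Burden

variable {V : Type*} [Fintype V]

theorem burden_add_one_le_sub {x : V → ℝ} (hsep : ∀ u v, u ≠ v → 1 ≤ |x u - x v|) {u v : V}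
    (h : x u < x v) : (burden x u v : ℝ) + 1 ≤ x v - x u := by
  classical
  have hle_pred : ∀ w, x w < x v → x w ≤ x v - 1 := fun w hw => by
    rcases le_abs'.1 (hsep w v (fun hwv => hw.ne (congrArg x hwv))) with h' | h' <;> linarith
  set between := univ.filter fun w : V => x u < x w ∧ x w < x v
  have hcard : #(insert u between) = burden x u v + 1 := by
    rw [card_insert_of_notMem (by simp [between]), burden]
  have hbound := card_le_sub_add_one_of_pairwise_one_le_abs_sub (s := insert u between)
    (hle_pred u h) (fun w hw => ?_) (fun w _ w' _ hne => hsep w w' hne)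
  · rw [hcard] at hbound
    push_cast at hbound
    linarith
  · rcases mem_insert.1 hw with rfl | hw
    · exact ⟨le_rfl, hle_pred w h⟩
    · obtain ⟨h₁, h₂⟩ := (mem_filter.1 hw).2
      exact ⟨h₁.le, hle_pred w h₂⟩

open Classical in
noncomputable def rank (f : V → ℝ) (v : V) : ℕ :=
  #{w | f w < f v}

theorem rank_add_burden {f : V → ℝ} (hf : Function.Injective f) {u v : V} (h : f u < f v) :
    rank f u + burden f u v + 1 = rank f v := by
  classical
  set left : Finset V := univ.filter fun w => f w < f u
  set between : Finset V := univ.filter fun w => f u < f w ∧ f w < f v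
  have hsplit : univ.filter (fun w => f w < f v) = left ∪ insert u between := by
    ext w
    simp only [left, between, mem_filter, mem_univ, true_and, mem_union, mem_insert]
    rcases lt_trichotomy (f w) (f u) with hw | hw | hw
    · simp [hw, hw.trans h]
    · simp [hf hw, h]
    · simp only [hw, hw.not_gt, true_and, false_or, iff_or_self]
      rintro rfl
      exact h
  have hdisj : Disjoint left (insert u between) := by
    simp only [left, between, disjoint_insert_right, mem_filter, lt_irrefl, and_false,
      not_false_eq_true, true_and, disjoint_filter]
    exact fun w _ hw h' => hw.not_gt h'.1
  have hcard := card_union_of_disjoint hdisj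
  rw [← hsplit, card_insert_of_notMem (by simp [between])] at hcard
  rw [rank, rank, burden, add_assoc]
  convert hcard.symm

theorem rank_lt_rank_iff {f : V → ℝ} (hf : Function.Injective f) {u v : V} :
    rank f u < rank f v ↔ f u < f v := by
  refine ⟨fun h => ?_, fun h => by have := rank_add_burden hf h; omega⟩
  rcases lt_trichotomy (f u) (f v) with huv | huv | huv
  · exact huv
  · exact absurd (hf huv ▸ h) (lt_irrefl _)
  · have := rank_add_burden hf huv; omega

theorem cast_rank_sub_cast_rank {f : V → ℝ} (hf : Function.Injective f) {u v : V}
    (h : f u < f v) : (rank f v : ℝ) - rank f u = burden f u v + 1 := by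
  rw [← rank_add_burden hf h]
  push_cast
  ring

theorem one_le_abs_cast_rank_sub {f : V → ℝ} (hf : Function.Injective f) {u v : V}
    (h : u ≠ v) : 1 ≤ |(rank f u : ℝ) - rank f v| := by
  have hne : rank f u ≠ rank f v := fun hr => by
    rcases lt_or_gt_of_ne (hf.ne h) with hlt | hlt
    · exact ((rank_lt_rank_iff hf).2 hlt).ne hr
    · exact ((rank_lt_rank_iff hf).2 hlt).ne hr.symm
  exact_mod_cast Int.one_le_abs (sub_ne_zero.2 (Nat.cast_injective.ne hne))

end Burden

section TwoDim

variable {V : Type*} {G : SimpleGraph V} {ω : V → V → ℝ} {x : V → ℝ}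

theorem IsBE.of_lt_iff {f : V → ℝ} (hf : IsBE G f) (hx : ∀ u v, x u < x v ↔ f u < f v) :
    IsBE G x := by
  refine ⟨fun u v huv => hf.1 ?_, fun a b c d hab hcd hcross => hf.2 a b c d hab hcd ?_⟩
  · by_contra hne
    rcases lt_or_gt_of_ne hne with h | h
    · exact ((hx u v).2 h).ne huv
    · exact ((hx v u).2 h).ne huv.symm
  · simpa only [hx] using hcross

theorem IsTwoDimBE.one_le_height_iff {ylo yhi : V → V → ℝ} (h : IsTwoDimBE G ω x ylo yhi) :
    (∀ u v, G.Adj u v → 1 ≤ yhi u v - ylo u v) ↔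
      ∀ u v, G.Adj u v → x u < x v → x v - x u ≤ ω u v := by
  obtain ⟨hBE, hlo, hhi, -, harea, -⟩ := h
  have hforward : ∀ u v, G.Adj u v → x u < x v →
      (1 ≤ yhi u v - ylo u v ↔ x v - x u ≤ ω u v) := by
    intro u v huv hlt
    rw [← harea u v huv hlt, le_mul_iff_one_le_right (sub_pos.2 hlt)]
  refine ⟨fun H u v huv hlt => (hforward u v huv hlt).1 (H u v huv), fun H u v huv => ?_⟩
  rcases lt_or_gt_of_ne (hBE.1.ne huv.ne) with hlt | hlt
  · exact (hforward u v huv hlt).2 (H u v huv hlt)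
  · rw [hlo, hhi]
    exact (hforward v u huv.symm hlt).2 (H v u huv.symm hlt)

end TwoDim

section Heights

variable {V : Type*} [Fintype V] (G : SimpleGraph V) (ω : V → V → ℝ) {x : V → ℝ}

theorem burden_lt_of_wraps (hx : Function.Injective x) {u v w z : V} (h : Wraps G x u v w z) :
    burden x w z < burden x u v := by
  classical
  obtain ⟨-, -, hne, huw, hwz, hzv⟩ := h
  unfold burden
  refine card_lt_card ((ssubset_iff_of_subset fun t ht => ?_).2 ?_)
  · simp only [mem_filter, mem_univ, true_and] at ht ⊢
    exact ⟨huw.trans_lt ht.1, ht.2.trans_le hzv⟩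
  rcases huw.lt_or_eq with huw | huw
  · exact ⟨w, by simp [huw, hwz.trans_le hzv], by simp⟩
  rcases hzv.lt_or_eq with hzv | hzv
  · exact ⟨z, by simp [huw ▸ hwz, hzv], by simp⟩
  · exact absurd (by rw [hx huw, hx hzv]) hne

open Classical in
noncomputable def nestedEdges (x : V → ℝ) (u v : V) : Finset (V × V) :=
  univ.filter fun p => Wraps G x u v p.1 p.2

theorem mem_nestedEdges {u v : V} {p : V × V} :
    p ∈ nestedEdges G x u v ↔ Wraps G x u v p.1 p.2 := by
  simp [nestedEdges]

/-- The top of the rectangle of `(u, v)`, meaningful only when `x u < x v`. -/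
noncomputable def yMax (hx : Function.Injective x) (u v : V) : ℝ :=
  (nestedEdges G x u v).attach.fold max 0 (fun p => yMax hx p.1.1 p.1.2) + ω u v / (x v - x u)
termination_by burden x u v
decreasing_by exact burden_lt_of_wraps G hx (mem_nestedEdges G |>.1 p.2)

noncomputable def yMin (hx : Function.Injective x) (u v : V) : ℝ :=
  (nestedEdges G x u v).attach.fold max 0 (fun p => yMax G ω hx p.1.1 p.1.2)

section

variable (hx : Function.Injective x) {u v : V}

theorem yMax_eq : yMax G ω hx u v = yMin G ω hx u v + ω u v / (x v - x u) := by
  rw [yMax, yMin]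

theorem yMin_nonneg : 0 ≤ yMin G ω hx u v :=
  (le_fold_max 0).2 (Or.inl le_rfl)

theorem yMax_le_yMin {w z : V} (h : Wraps G x u v w z) : yMax G ω hx w z ≤ yMin G ω hx u v :=
  (le_fold_max _).2 (Or.inr ⟨⟨(w, z), (mem_nestedEdges G).2 h⟩, mem_attach _ _, le_rfl⟩)

theorem yMax_pos (hω : 0 < ω u v) (h : x u < x v) : 0 < yMax G ω hx u v := by
  rw [yMax_eq]
  linarith [yMin_nonneg G ω hx (u := u) (v := v), div_pos hω (sub_pos.2 h)]

theorem yMin_eq_zero_or :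
    yMin G ω hx u v = 0 ∨ ∃ w z, Wraps G x u v w z ∧ yMin G ω hx u v = yMax G ω hx w z := by
  rcases fold_max_eq_or (nestedEdges G x u v).attach 0 (fun p => yMax G ω hx p.1.1 p.1.2)
    with h | ⟨p, -, h⟩
  · exact Or.inl h
  · exact Or.inr ⟨p.1.1, p.1.2, (mem_nestedEdges G).1 p.2, h⟩

end

variable {G} in
theorem IsBE.exists_isTwoDimBE (hx : IsBE G x)
    (hω : ∀ u v, G.Adj u v → x u < x v → 0 < ω u v) :
    ∃ ylo yhi, IsTwoDimBE G ω x ylo yhi := by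
  refine ⟨orient x (yMin G ω hx.1), orient x (yMax G ω hx.1), hx, orient_comm hx.1 _,
    orient_comm hx.1 _, fun u v _ => ?_, fun u v _ huv => ?_,
    fun u v _ huv => ⟨fun w z hwz => ?_, ?_⟩⟩
  · unfold orient
    split_ifs <;> exact yMin_nonneg G ω hx.1
  · rw [orient_of_lt huv, orient_of_lt huv, yMax_eq, add_sub_cancel_left,
      mul_div_cancel₀ _ (sub_pos.2 huv).ne']
  · rw [orient_of_lt hwz.2.2.2.2.1, orient_of_lt huv]
    exact yMax_le_yMin G ω hx.1 hwz
  · rw [orient_of_lt huv]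
    rcases yMin_eq_zero_or G ω hx.1 (u := u) (v := v) with h0 | ⟨w, z, hwz, h⟩
    · refine Or.inr ⟨fun ⟨w, z, hwz⟩ => ?_, h0⟩
      have hwz_lt := hwz.2.2.2.2.1
      linarith [yMax_le_yMin G ω hx.1 hwz, yMax_pos G ω hx.1 (hω w z hwz.2.1 hwz_lt) hwz_lt]
    · exact Or.inl ⟨w, z, hwz, by rw [orient_of_lt hwz.2.2.2.2.1, h]⟩

end Heights

theorem minres_twodim_iff_minres_supporting_general {V : Type*} [Fintype V]
    (G : SimpleGraph V) (ω : V → V → ℝ) :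
    (∃ (x : V → ℝ) (ylo yhi : V → V → ℝ),
      IsTwoDimBE G ω x ylo yhi ∧
      (∀ u v : V, G.Adj u v → x u < x v → 1 ≤ x v - x u) ∧
      (∀ u v : V, G.Adj u v → 1 ≤ yhi u v - ylo u v) ∧
      (∀ u v : V, u ≠ v → 1 ≤ |x u - x v|)) ↔
    (∃ f : V → ℝ, IsMinresBE G ω f) := by
  constructor
  · rintro ⟨x, ylo, yhi, h2d, -, hheight, hsep⟩
    refine ⟨x, h2d.1, fun u v huv hlt => ?_⟩
    calc (burden x u v : ℝ) + 1 ≤ x v - x u := burden_add_one_le_sub hsep hlt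
      _ ≤ ω u v := h2d.one_le_height_iff.1 hheight u v huv hlt
  · rintro ⟨f, hf, hmin⟩
    let x : V → ℝ := fun v => rank f v
    have hxf : ∀ u v, x u < x v ↔ f u < f v := fun u v =>
      Nat.cast_lt.trans (rank_lt_rank_iff hf.1)
    have hwidth : ∀ u v, G.Adj u v → x u < x v → burden f u v + 1 ≤ x v - x u ∧
        x v - x u ≤ ω u v := fun u v huv hlt => by
      rw [cast_rank_sub_cast_rank hf.1 ((hxf u v).1 hlt)]
      exact ⟨le_rfl, hmin u v huv ((hxf u v).1 hlt)⟩
    obtain ⟨ylo, yhi, h2d⟩ := (hf.of_lt_iff hxf).exists_isTwoDimBE ω fun u v huv hlt =>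
      (sub_pos.2 hlt).trans_le (hwidth u v huv hlt).2
    refine ⟨x, ylo, yhi, h2d, fun u v huv hlt => ?_,
      h2d.one_le_height_iff.2 fun u v huv hlt => (hwidth u v huv hlt).2,
      fun u v huv => one_le_abs_cast_rank_sub hf.1 huv⟩
    linarith [(hwidth u v huv hlt).1, (burden f u v).cast_nonneg (α := ℝ)]

/-- a weighted graph admits a minres-constrained two-dimensional
book-embedding if and only if it admits a 1-page book-embedding in which the weight of
every edge is at least its burden plus one. -/
theorem minres_twodim_iff_minres_supporting {V : Type*} [Fintype V]
    (G : SimpleGraph V) (ω : V → V → ℝ)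
    (hsym : ∀ u v, ω u v = ω v u)
    (hpos : ∀ u v, G.Adj u v → 0 < ω u v) :
    (∃ (x : V → ℝ) (ylo yhi : V → V → ℝ),
      IsTwoDimBE G ω x ylo yhi ∧
      (∀ u v : V, G.Adj u v → x u < x v → 1 ≤ x v - x u) ∧
      (∀ u v : V, G.Adj u v → 1 ≤ yhi u v - ylo u v) ∧
      (∀ u v : V, u ≠ v → 1 ≤ |x u - x v|)) ↔
    (∃ f : V → ℝ, IsMinresBE G ω f) :=
  minres_twodim_iff_minres_supporting_general G ω

end Schematic
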